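/- For any r > 0 and any real matrices A_1, ..., A_t (of compatible dimensions), the sum over i of σ_i(A_1⋯A_t)^r is at most the sum over i of σ_i(A_1)^r · σ_i(A_2)^r ⋯ σ_i(A_t)^r, where σ_i denotes the i-th largest singular value. -/

import Mathlib

open Matrix

/-- The eigenvalues of a Hermitian matrix, sorted in decreasing order
(`sortedEigs B hB 0` is the largest eigenvalue). -/
noncomputable def sortedEigs {d : ℕ} (B : Matrix (Fin d) (Fin d) ℝ) (hB : B.IsHermitian)
    (i : Fin d) : ℝ :=
  (hB.eigenvalues ∘ Tuple.sort hB.eigenvalues) i.rev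

/-- The `i`-th largest singular value of a real matrix `A`, i.e. the square root of the
`i`-th largest eigenvalue of `AᵀA`. -/
noncomputable def singVal {n d : ℕ} (A : Matrix (Fin n) (Fin d) ℝ) (i : Fin d) : ℝ :=
  Real.sqrt (sortedEigs (Aᴴ * A) (isHermitian_conjTranspose_mul_self A) i)

/-- The spectral (operator) norm of a real matrix: its largest singular value. -/
noncomputable def opNorm {n d : ℕ} [NeZero d] (A : Matrix (Fin n) (Fin d) ℝ) : ℝ :=
  singVal A 0

/-- Squared Euclidean norm of a vector. -/
def eNormSq {d : ℕ} (x : Fin d → ℝ) : ℝ := ∑ i, x i ^ 2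

/-- Euclidean norm of a vector. -/
noncomputable def eNorm {d : ℕ} (x : Fin d → ℝ) : ℝ := Real.sqrt (eNormSq x)

/-- Squared Frobenius norm of a matrix. -/
def frobSq {n d : ℕ} (M : Matrix (Fin n) (Fin d) ℝ) : ℝ := ∑ i, ∑ j, M i j ^ 2

namespace WangXi

open Finset Equiv

open Classical in
/-- The finset of strictly monotone maps `Fin k → Fin d`. -/
noncomputable def monoSet (k d : ℕ) : Finset (Fin k → Fin d) :=
  Finset.univ.filter fun f => StrictMono f

lemma mem_monoSet {k d : ℕ} {f : Fin k → Fin d} : f ∈ monoSet k d ↔ StrictMono f := by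
  classical
  simp [monoSet]

/-- Cauchy–Binet formula. -/
theorem cauchyBinet {k d : ℕ} (A : Matrix (Fin k) (Fin d) ℝ) (B : Matrix (Fin d) (Fin k) ℝ) :
    det (A * B) = ∑ f ∈ monoSet k d, det (A.submatrix id f) * det (B.submatrix f id) := by
  classical
  have step1 : det (A * B) =
      ∑ p : Fin k → Fin d, det (A.submatrix id p) * ∏ i, B (p i) i := by
    calc det (A * B)
        = ∑ σ : Perm (Fin k), Equiv.Perm.sign σ • ∏ i, ∑ l, A (σ i) l * B l i := by
          rw [det_apply]; rfl
      _ = ∑ σ : Perm (Fin k), ∑ p : Fin k → Fin d,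
            Equiv.Perm.sign σ • ∏ i, A (σ i) (p i) * B (p i) i := by
          refine Finset.sum_congr rfl fun σ _ => ?_
          rw [Finset.prod_univ_sum, Finset.smul_sum]
          simp [Fintype.piFinset_univ]
      _ = ∑ p : Fin k → Fin d, ∑ σ : Perm (Fin k),
            Equiv.Perm.sign σ • ∏ i, A (σ i) (p i) * B (p i) i := Finset.sum_comm
      _ = ∑ p : Fin k → Fin d, det (A.submatrix id p) * ∏ i, B (p i) i := by
          refine Finset.sum_congr rfl fun p _ => ?_
          rw [det_apply, Finset.sum_mul]
          refine Finset.sum_congr rfl fun σ _ => ?_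
          rw [Finset.prod_mul_distrib, smul_mul_assoc]
          rfl
  rw [step1]
  rw [← Finset.sum_filter_add_sum_filter_not Finset.univ (fun p => Function.Injective p)]
  have hzero : ∑ p ∈ Finset.univ.filter (fun p : Fin k → Fin d => ¬ Function.Injective p),
      det (A.submatrix id p) * ∏ i, B (p i) i = 0 := by
    refine Finset.sum_eq_zero fun p hp => ?_
    simp only [Finset.mem_filter] at hp
    obtain ⟨i, j, hij, hne⟩ : ∃ i j, p i = p j ∧ i ≠ j := by
      have := hp.2
      rw [Function.Injective] at this
      push_neg at this
      obtain ⟨i, j, h1, h2⟩ := this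
      exact ⟨i, j, h1, h2⟩
    have hdet : det (A.submatrix id p) = 0 := by
      rw [← det_transpose]
      exact Matrix.detRowAlternating.map_eq_zero_of_eq _
        (show (A.submatrix id p)ᵀ i = (A.submatrix id p)ᵀ j by
          funext l; simp [Matrix.transpose_apply, hij]) hne
    rw [hdet, zero_mul]
  rw [hzero, add_zero]
  have step3 : ∑ p ∈ Finset.univ.filter (fun p : Fin k → Fin d => Function.Injective p),
      det (A.submatrix id p) * ∏ i, B (p i) i
      = ∑ q ∈ (monoSet k d) ×ˢ (Finset.univ : Finset (Perm (Fin k))),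
        det (A.submatrix id (q.1 ∘ q.2)) * ∏ i, B ((q.1 ∘ q.2) i) i := by
    refine Finset.sum_nbij' (i := fun p => (p ∘ Tuple.sort p, (Tuple.sort p)⁻¹))
      (j := fun q => q.1 ∘ q.2) ?_ ?_ ?_ ?_ ?_
    · intro p hp
      simp only [Finset.mem_filter, Finset.mem_univ, true_and] at hp
      refine Finset.mem_product.2 ⟨mem_monoSet.2 ?_, Finset.mem_univ _⟩
      exact (Tuple.monotone_sort p).strictMono_of_injective
        (hp.comp (Tuple.sort p).injective)
    · intro q hq
      simp only [Finset.mem_filter, Finset.mem_univ, true_and]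
      have hf := mem_monoSet.1 (Finset.mem_product.1 hq).1
      exact hf.injective.comp q.2.injective
    · intro p hp
      funext i
      simp
    · intro q hq
      have hf : StrictMono q.1 := mem_monoSet.1 (Finset.mem_product.1 hq).1
      -- let g be the sorted version of q.1 ∘ q.2
      set p := q.1 ∘ q.2 with hpdef
      have hpinj : Function.Injective p := hf.injective.comp q.2.injective
      set ρ := Tuple.sort p with hρ
      have hg : StrictMono (p ∘ ρ) :=
        (Tuple.monotone_sort p).strictMono_of_injective (hpinj.comp ρ.injective)
      -- both q.1 and p ∘ ρ are strict mono with the same image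
      have himage : ∀ x, (p ∘ ρ) x ∈ Finset.univ.image q.1 := by
        intro x
        exact Finset.mem_image.2 ⟨q.2 (ρ x), Finset.mem_univ _, rfl⟩
      have hcard : (Finset.univ.image q.1).card = k := by
        rw [Finset.card_image_of_injective _ hf.injective, Finset.card_univ, Fintype.card_fin]
      have h1 : p ∘ ρ = (Finset.univ.image q.1).orderEmbOfFin hcard :=
        Finset.orderEmbOfFin_unique hcard himage hg
      have h2 : q.1 = (Finset.univ.image q.1).orderEmbOfFin hcard :=
        Finset.orderEmbOfFin_unique hcard
          (fun x => Finset.mem_image.2 ⟨x, Finset.mem_univ _, rfl⟩) hf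
      have hfg : p ∘ ρ = q.1 := h1.trans h2.symm
      have hρτ : ρ = q.2⁻¹ := by
        apply Equiv.ext
        intro i
        have h3 : q.2 (ρ i) = i := hf.injective (congrFun hfg i)
        exact q.2.injective (by simp [h3])
      show (p ∘ ⇑ρ, ρ⁻¹) = q
      rw [hfg, hρτ, inv_inv]
    · intro p hp
      have hcmp : (p ∘ ⇑(Tuple.sort p)) ∘ ⇑(Tuple.sort p)⁻¹ = p := by funext i; simp
      simp only [hcmp]
  rw [step3, Finset.sum_product]
  refine Finset.sum_congr rfl fun f hf => ?_
  have hsub : ∀ τ : Perm (Fin k), A.submatrix id (f ∘ τ) = (A.submatrix id f).submatrix id τ :=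
    fun τ => rfl
  calc ∑ τ : Perm (Fin k), det (A.submatrix id (f ∘ τ)) * ∏ i, B ((f ∘ τ) i) i
      = ∑ τ : Perm (Fin k), (Equiv.Perm.sign τ : ℝ) * det (A.submatrix id f) * ∏ i, B (f (τ i)) i := by
        refine Finset.sum_congr rfl fun τ _ => ?_
        rw [hsub τ, Matrix.det_permute']
        rfl
    _ = det (A.submatrix id f) * ∑ τ : Perm (Fin k), (Equiv.Perm.sign τ : ℝ) * ∏ i, B (f (τ i)) i := by
        rw [Finset.mul_sum]
        refine Finset.sum_congr rfl fun τ _ => by ring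
    _ = det (A.submatrix id f) * det (B.submatrix f id) := by
        rw [Matrix.det_apply' (B.submatrix f id)]
        rfl



/-- A strictly monotone map `Fin k → Fin d` satisfies `i ≤ f i` (as naturals). -/
lemma strictMono_val_le {k d : ℕ} {g : Fin k → Fin d} (hg : StrictMono g) (i : Fin k) :
    (i : ℕ) ≤ (g i : ℕ) := by
  have H : ∀ n (hn : n < k), n ≤ (g ⟨n, hn⟩ : ℕ) := by
    intro n
    induction n with
    | zero => intro hn; exact Nat.zero_le _
    | succ m ih =>
      intro hn
      have hm : m < k := Nat.lt_of_succ_lt hn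
      have h1 : (g ⟨m, hm⟩ : ℕ) < (g ⟨m + 1, hn⟩ : ℕ) := hg (by simp [Fin.lt_def])
      have h2 := ih hm
      omega
  simpa using H i.1 i.2

/-- Decreasing rearrangement of a tuple. -/
noncomputable def sortedDesc {d : ℕ} (v : Fin d → ℝ) (i : Fin d) : ℝ :=
  (v ∘ Tuple.sort v) i.rev

lemma sortedDesc_antitone {d : ℕ} (v : Fin d → ℝ) : Antitone (sortedDesc v) := by
  intro i j hij
  exact Tuple.monotone_sort v (by simpa using Fin.rev_le_rev.2 hij)

lemma sortedDesc_eq {d : ℕ} (v : Fin d → ℝ) (j : Fin d) :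
    v j = sortedDesc v (((Tuple.sort v)⁻¹ j).rev) := by
  simp [sortedDesc, Fin.rev_rev]

lemma sortedDesc_nonneg {d : ℕ} {v : Fin d → ℝ} (hv : ∀ i, 0 ≤ v i) (i : Fin d) :
    0 ≤ sortedDesc v i := hv _

/-- Product over an injective selection is at most the product of the top `k` values. -/
lemma prod_injective_le_top {k d : ℕ} (hk : k ≤ d) {s : Fin d → ℝ}
    (hs0 : ∀ i, 0 ≤ s i) (hsa : Antitone s) {t : Fin k → Fin d}
    (ht : Function.Injective t) :
    ∏ i, s (t i) ≤ ∏ i : Fin k, s (Fin.castLE hk i) := by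
  classical
  set τ := Tuple.sort t with hτ
  have hg : StrictMono (t ∘ τ) :=
    (Tuple.monotone_sort t).strictMono_of_injective (ht.comp τ.injective)
  have hre : ∏ i, s (t i) = ∏ i, s (t (τ i)) := (Fintype.prod_equiv τ _ _ fun i => rfl).symm
  rw [hre]
  refine Finset.prod_le_prod (fun i _ => hs0 _) fun i _ => ?_
  refine hsa ?_
  have := strictMono_val_le hg i
  exact Fin.le_def.2 (by simpa using this)

/-- Any `k`-subset product of nonneg values is at most the product of the top `k`
values of the decreasing rearrangement. -/
lemma prod_comp_le_top {k d : ℕ} (hk : k ≤ d) {v : Fin d → ℝ} (hv : ∀ i, 0 ≤ v i)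
    {f : Fin k → Fin d} (hf : Function.Injective f) :
    ∏ i, v (f i) ≤ ∏ i : Fin k, sortedDesc v (Fin.castLE hk i) := by
  have h1 : ∏ i, v (f i) = ∏ i, sortedDesc v (((Tuple.sort v)⁻¹ (f i)).rev) := by
    refine Finset.prod_congr rfl fun i _ => ?_
    rw [← sortedDesc_eq]
  rw [h1]
  refine prod_injective_le_top hk (sortedDesc_nonneg hv) (sortedDesc_antitone v) ?_
  intro a b hab
  have := Fin.rev_injective hab
  exact hf ((Tuple.sort v)⁻¹.injective this)

/-- Key Cauchy–Binet consequence: conjugating a nonnegative diagonal matrix. -/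
lemma det_conj_diag_le {d k : ℕ} (μ : Fin d → ℝ) (c : ℝ)
    (hmax : ∀ f : Fin k → Fin d, StrictMono f → ∏ i, μ (f i) ≤ c)
    (P : Matrix (Fin d) (Fin k) ℝ) :
    det (Pᵀ * Matrix.diagonal μ * P) ≤ c * det (Pᵀ * P) := by
  classical
  have e1 : ∀ f : Fin k → Fin d,
      (Pᵀ * Matrix.diagonal μ).submatrix id f
        = (P.submatrix f id)ᵀ * Matrix.diagonal (fun j => μ (f j)) := by
    intro f
    ext i j
    simp [Matrix.mul_apply, Matrix.diagonal, Matrix.submatrix, Finset.sum_ite_eq,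
      Matrix.transpose_apply, mul_comm]
  have e2 : ∀ f : Fin k → Fin d, Pᵀ.submatrix id f = (P.submatrix f id)ᵀ := fun f => rfl
  rw [cauchyBinet (Pᵀ * Matrix.diagonal μ) P, cauchyBinet Pᵀ P]
  rw [Finset.mul_sum]
  refine Finset.sum_le_sum fun f hf => ?_
  rw [e1 f, e2 f, Matrix.det_mul, Matrix.det_transpose, Matrix.det_diagonal]
  have hsq : (0 : ℝ) ≤ det (P.submatrix f id) * det (P.submatrix f id) := mul_self_nonneg _
  calc (det (P.submatrix f id) * ∏ i, μ (f i)) * det (P.submatrix f id)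
      = (∏ i, μ (f i)) * (det (P.submatrix f id) * det (P.submatrix f id)) := by ring
    _ ≤ c * (det (P.submatrix f id) * det (P.submatrix f id)) :=
        mul_le_mul_of_nonneg_right (hmax f (mem_monoSet.1 hf)) hsq


lemma sortedEigs_eq_sortedDesc {d : ℕ} (B : Matrix (Fin d) (Fin d) ℝ) (hB : B.IsHermitian) :
    sortedEigs B hB = sortedDesc hB.eigenvalues := rfl

variable {d k : ℕ}

lemma sortedEigs_gram_nonneg (M : Matrix (Fin d) (Fin d) ℝ) (i : Fin d) :
    0 ≤ sortedEigs (Mᴴ * M) (isHermitian_conjTranspose_mul_self M) i :=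
  Matrix.eigenvalues_conjTranspose_mul_self_nonneg M _

lemma singVal_nonneg (M : Matrix (Fin d) (Fin d) ℝ) (i : Fin d) : 0 ≤ singVal M i :=
  Real.sqrt_nonneg _

lemma sq_singVal (M : Matrix (Fin d) (Fin d) ℝ) (i : Fin d) :
    singVal M i ^ 2 = sortedEigs (Mᴴ * M) (isHermitian_conjTranspose_mul_self M) i :=
  Real.sq_sqrt (sortedEigs_gram_nonneg M i)

lemma sortedEigs_antitone {d : ℕ} (B : Matrix (Fin d) (Fin d) ℝ) (hB : B.IsHermitian) :
    Antitone (sortedEigs B hB) := by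
  intro i j hij
  exact Tuple.monotone_sort hB.eigenvalues (by simpa using Fin.rev_le_rev.2 hij)

lemma singVal_antitone (M : Matrix (Fin d) (Fin d) ℝ) : Antitone (singVal M) := by
  intro i j hij
  exact Real.sqrt_le_sqrt (sortedEigs_antitone _ _ hij)

/-- Real spectral theorem, real-coefficient form. -/
lemma real_spectral (B : Matrix (Fin d) (Fin d) ℝ) (hB : B.IsHermitian) :
    B = (hB.eigenvectorUnitary : Matrix (Fin d) (Fin d) ℝ) * diagonal hB.eigenvalues
      * (star (hB.eigenvectorUnitary : Matrix (Fin d) (Fin d) ℝ)) := by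
  have := hB.spectral_theorem
  simpa using this

lemma real_diag (B : Matrix (Fin d) (Fin d) ℝ) (hB : B.IsHermitian) :
    (star (hB.eigenvectorUnitary : Matrix (Fin d) (Fin d) ℝ)) * B
      * (hB.eigenvectorUnitary : Matrix (Fin d) (Fin d) ℝ) = diagonal hB.eigenvalues := by
  have := hB.conjStarAlgAut_star_eigenvectorUnitary
  simpa using this


variable {d k : ℕ}

/-- Compression of a Hermitian matrix to its top-`k` eigenvectors. -/
lemma exists_compression (hk : k ≤ d) (B : Matrix (Fin d) (Fin d) ℝ)
    (hB : B.IsHermitian) :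
    ∃ X : Matrix (Fin d) (Fin k) ℝ, Xᴴ * X = 1 ∧
      Xᴴ * B * X = Matrix.diagonal (fun i => sortedEigs B hB (Fin.castLE hk i)) := by
  classical
  set U := (hB.eigenvectorUnitary : Matrix (Fin d) (Fin d) ℝ) with hU
  set p : Fin k → Fin d := fun i => Tuple.sort hB.eigenvalues ((Fin.castLE hk i).rev) with hp
  have hpinj : Function.Injective p := by
    intro a b hab
    have h1 := (Tuple.sort hB.eigenvalues).injective hab
    have h2 := Fin.rev_injective h1
    exact Fin.castLE_injective hk h2
  have hUU : Uᴴ * U = 1 := by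
    have := Matrix.mem_unitaryGroup_iff'.1 (hB.eigenvectorUnitary).2
    simpa [Matrix.star_eq_conjTranspose] using this
  refine ⟨U.submatrix id p, ?_, ?_⟩
  · ext i j
    have e : ((U.submatrix id p)ᴴ * U.submatrix id p) i j = (Uᴴ * U) (p i) (p j) := by
      simp [Matrix.mul_apply, Matrix.conjTranspose_apply, Matrix.submatrix_apply]
    rw [e, hUU]
    by_cases h : i = j
    · subst h; simp
    · rw [Matrix.one_apply_ne (fun hc => h (hpinj hc)), Matrix.one_apply_ne h]
  · have hD := real_diag B hB
    have hD' : Uᴴ * B * U = Matrix.diagonal hB.eigenvalues := by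
      rw [← Matrix.star_eq_conjTranspose]; exact hD
    ext i j
    have e : ((U.submatrix id p)ᴴ * B * U.submatrix id p) i j = (Uᴴ * B * U) (p i) (p j) := by
      simp only [Matrix.mul_apply, Matrix.conjTranspose_apply, Matrix.submatrix_apply, id_eq]
      try rw [Finset.sum_comm]
      try refine Finset.sum_congr rfl fun b _ => ?_
      try rw [Finset.sum_mul, Finset.mul_sum]
      try refine Finset.sum_congr rfl fun a _ => by ring
    rw [e, hD']
    by_cases h : i = j
    · subst h
      rw [Matrix.diagonal_apply_eq, Matrix.diagonal_apply_eq]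
      rfl
    · rw [Matrix.diagonal_apply_ne _ (fun hc => h (hpinj hc)), Matrix.diagonal_apply_ne _ h]

lemma eig_gram_nonneg (M : Matrix (Fin d) (Fin d) ℝ) (i : Fin d) :
    0 ≤ (isHermitian_conjTranspose_mul_self M).eigenvalues i :=
  Matrix.eigenvalues_conjTranspose_mul_self_nonneg M i

/-- Key bound: compressing the Gram matrix of `M` by any `N`. -/
lemma det_conj_psd_le (hk : k ≤ d) (M : Matrix (Fin d) (Fin d) ℝ)
    (N : Matrix (Fin d) (Fin k) ℝ) :
    det (Nᴴ * (Mᴴ * M) * N)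
      ≤ (∏ i : Fin k, sortedEigs (Mᴴ * M) (isHermitian_conjTranspose_mul_self M) (Fin.castLE hk i))
        * det (Nᴴ * N) := by
  classical
  set hH := isHermitian_conjTranspose_mul_self M with hhH
  set U := (hH.eigenvectorUnitary : Matrix (Fin d) (Fin d) ℝ) with hU
  have hUU : Uᴴ * U = 1 := by
    have := Matrix.mem_unitaryGroup_iff'.1 (hH.eigenvectorUnitary).2
    exact this
  have hUU' : U * Uᴴ = 1 := by
    have := Matrix.mem_unitaryGroup_iff.1 (hH.eigenvectorUnitary).2
    exact this
  have hspec : Mᴴ * M = U * Matrix.diagonal hH.eigenvalues * Uᴴ := by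
    have := real_spectral (Mᴴ * M) hH
    exact this
  set P := Uᴴ * N with hP
  have hPT : Pᵀ = Nᴴ * U := by
    rw [hP, ← Matrix.conjTranspose_eq_transpose_of_trivial, Matrix.conjTranspose_mul,
      Matrix.conjTranspose_conjTranspose]
  have h1 : Nᴴ * (Mᴴ * M) * N = Pᵀ * Matrix.diagonal hH.eigenvalues * P := by
    conv_lhs => rw [hspec]
    rw [hPT, hP]
    simp only [Matrix.mul_assoc]
  have h2 : Pᵀ * P = Nᴴ * N := by
    rw [hPT, hP, Matrix.mul_assoc, ← Matrix.mul_assoc U, hUU', Matrix.one_mul]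
  have hmax : ∀ f : Fin k → Fin d, StrictMono f →
      ∏ i, hH.eigenvalues (f i)
        ≤ ∏ i : Fin k, sortedEigs (Mᴴ * M) hH (Fin.castLE hk i) := by
    intro f hf
    have := prod_comp_le_top hk (v := hH.eigenvalues)
      (fun i => eig_gram_nonneg M i) hf.injective
    exact this
  have hfin := det_conj_diag_le hH.eigenvalues _ hmax P
  rw [h1, ← h2]
  exact hfin

lemma prod_singVal_nonneg (hk : k ≤ d) (M : Matrix (Fin d) (Fin d) ℝ) :
    0 ≤ ∏ i : Fin k, singVal M (Fin.castLE hk i) :=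
  Finset.prod_nonneg fun i _ => singVal_nonneg M _

lemma prod_sq_singVal (hk : k ≤ d) (M : Matrix (Fin d) (Fin d) ℝ) :
    (∏ i : Fin k, singVal M (Fin.castLE hk i)) ^ 2
      = ∏ i : Fin k, sortedEigs (Mᴴ * M) (isHermitian_conjTranspose_mul_self M) (Fin.castLE hk i) := by
  rw [← Finset.prod_pow]
  exact Finset.prod_congr rfl fun i _ => sq_singVal M _

/-- Horn's inequality for two matrices. -/
lemma horn2 (hk : k ≤ d) (B C : Matrix (Fin d) (Fin d) ℝ) :
    ∏ i : Fin k, singVal (B * C) (Fin.castLE hk i)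
      ≤ (∏ i : Fin k, singVal B (Fin.castLE hk i)) * ∏ i : Fin k, singVal C (Fin.castLE hk i) := by
  classical
  obtain ⟨X, hX1, hX2⟩ := exists_compression hk ((B * C)ᴴ * (B * C))
    (isHermitian_conjTranspose_mul_self (B * C))
  have key : (∏ i : Fin k, singVal (B * C) (Fin.castLE hk i)) ^ 2
      ≤ ((∏ i : Fin k, singVal B (Fin.castLE hk i)) * ∏ i : Fin k, singVal C (Fin.castLE hk i)) ^ 2 := by
    have e1 : (∏ i : Fin k, singVal (B * C) (Fin.castLE hk i)) ^ 2
        = det (Xᴴ * ((B * C)ᴴ * (B * C)) * X) := by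
      rw [hX2, Matrix.det_diagonal, prod_sq_singVal hk]
    have e2 : Xᴴ * ((B * C)ᴴ * (B * C)) * X = (C * X)ᴴ * (Bᴴ * B) * (C * X) := by
      rw [Matrix.conjTranspose_mul, Matrix.conjTranspose_mul]
      simp only [Matrix.mul_assoc]
    have h3 : det ((C * X)ᴴ * (Bᴴ * B) * (C * X))
        ≤ (∏ i : Fin k, sortedEigs (Bᴴ * B) (isHermitian_conjTranspose_mul_self B) (Fin.castLE hk i))
          * det ((C * X)ᴴ * (C * X)) := det_conj_psd_le hk B (C * X)
    have e4 : (C * X)ᴴ * (C * X) = Xᴴ * (Cᴴ * C) * X := by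
      rw [Matrix.conjTranspose_mul]
      simp only [Matrix.mul_assoc]
    have h5 : det (Xᴴ * (Cᴴ * C) * X)
        ≤ (∏ i : Fin k, sortedEigs (Cᴴ * C) (isHermitian_conjTranspose_mul_self C) (Fin.castLE hk i))
          * det (Xᴴ * X) := det_conj_psd_le hk C X
    rw [hX1, Matrix.det_one, mul_one] at h5
    have hBnn : 0 ≤ ∏ i : Fin k, sortedEigs (Bᴴ * B)
        (isHermitian_conjTranspose_mul_self B) (Fin.castLE hk i) := by
      rw [← prod_sq_singVal hk]
      positivity
    calc (∏ i : Fin k, singVal (B * C) (Fin.castLE hk i)) ^ 2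
        = det ((C * X)ᴴ * (Bᴴ * B) * (C * X)) := by rw [e1, e2]
      _ ≤ (∏ i : Fin k, sortedEigs (Bᴴ * B) (isHermitian_conjTranspose_mul_self B) (Fin.castLE hk i))
            * det ((C * X)ᴴ * (C * X)) := h3
      _ ≤ (∏ i : Fin k, sortedEigs (Bᴴ * B) (isHermitian_conjTranspose_mul_self B) (Fin.castLE hk i))
            * ∏ i : Fin k, sortedEigs (Cᴴ * C) (isHermitian_conjTranspose_mul_self C) (Fin.castLE hk i) := by
          rw [e4]
          exact mul_le_mul_of_nonneg_left h5 hBnn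
      _ = ((∏ i : Fin k, singVal B (Fin.castLE hk i))
            * ∏ i : Fin k, singVal C (Fin.castLE hk i)) ^ 2 := by
          rw [mul_pow, prod_sq_singVal hk, prod_sq_singVal hk]
  have hL : 0 ≤ ∏ i : Fin k, singVal (B * C) (Fin.castLE hk i) := prod_singVal_nonneg hk _
  have hR : 0 ≤ (∏ i : Fin k, singVal B (Fin.castLE hk i))
      * ∏ i : Fin k, singVal C (Fin.castLE hk i) :=
    mul_nonneg (prod_singVal_nonneg hk B) (prod_singVal_nonneg hk C)
  nlinarith [key, hL, hR]

lemma singVal_one (i : Fin d) : singVal (1 : Matrix (Fin d) (Fin d) ℝ) i = 1 := by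
  classical
  set hH := isHermitian_conjTranspose_mul_self (1 : Matrix (Fin d) (Fin d) ℝ) with hhH
  have key : ∀ j, hH.eigenvalues j = 1 := by
    intro j
    set U := (hH.eigenvectorUnitary : Matrix (Fin d) (Fin d) ℝ) with hU
    have hD := real_diag _ hH
    have hUU : star U * U = 1 := Matrix.mem_unitaryGroup_iff'.1 (hH.eigenvectorUnitary).2
    have h2 : star U * ((1 : Matrix (Fin d) (Fin d) ℝ)ᴴ * 1) * U = 1 := by
      have e1 : ((1 : Matrix (Fin d) (Fin d) ℝ)ᴴ * 1) = 1 := by simp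
      calc star U * ((1 : Matrix (Fin d) (Fin d) ℝ)ᴴ * 1) * U
          = star U * U := by rw [e1, Matrix.mul_one]
        _ = 1 := hUU
    have hdiag : Matrix.diagonal hH.eigenvalues = 1 := hD.symm.trans h2
    have := congrFun (congrFun hdiag j) j
    simpa [Matrix.diagonal_apply_eq, Matrix.one_apply_eq] using this
  have : sortedEigs ((1 : Matrix (Fin d) (Fin d) ℝ)ᴴ * 1) hH i = 1 := key _
  rw [singVal, this, Real.sqrt_one]

/-- Horn's inequality for lists of matrices. -/
lemma horn_list (hk : k ≤ d) (l : List (Matrix (Fin d) (Fin d) ℝ)) :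
    ∏ i : Fin k, singVal l.prod (Fin.castLE hk i)
      ≤ ∏ i : Fin k, (l.map (fun M => singVal M (Fin.castLE hk i))).prod := by
  induction l with
  | nil => simp [singVal_one]
  | cons Bh tl ih =>
    have h1 : ∏ i : Fin k, singVal (Bh :: tl).prod (Fin.castLE hk i)
        ≤ (∏ i : Fin k, singVal Bh (Fin.castLE hk i))
          * ∏ i : Fin k, singVal tl.prod (Fin.castLE hk i) := by
      rw [List.prod_cons]
      exact horn2 hk Bh tl.prod
    calc ∏ i : Fin k, singVal (Bh :: tl).prod (Fin.castLE hk i)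
        ≤ (∏ i : Fin k, singVal Bh (Fin.castLE hk i))
            * ∏ i : Fin k, singVal tl.prod (Fin.castLE hk i) := h1
      _ ≤ (∏ i : Fin k, singVal Bh (Fin.castLE hk i))
            * ∏ i : Fin k, (tl.map (fun M => singVal M (Fin.castLE hk i))).prod :=
          mul_le_mul_of_nonneg_left ih (prod_singVal_nonneg hk Bh)
      _ = ∏ i : Fin k, ((Bh :: tl).map (fun M => singVal M (Fin.castLE hk i))).prod := by
          rw [← Finset.prod_mul_distrib]
          exact Finset.prod_congr rfl fun i _ => by simp

/-! #### Analytic lemmas: weak log-majorization implies sum inequality -/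

lemma abel_nonneg (m : ℕ) : ∀ (c s : ℕ → ℝ), (∀ i j, i ≤ j → j < m → c j ≤ c i) →
    (∀ i, i < m → 0 ≤ c i) → (∀ n, n ≤ m → 0 ≤ ∑ i ∈ Finset.range n, s i) →
    0 ≤ ∑ i ∈ Finset.range m, c i * s i := by
  induction m with
  | zero => intro c s _ _ _; simp
  | succ m ih =>
    intro c s hmono hpos hsum
    have key : ∑ i ∈ Finset.range (m + 1), c i * s i
        = (∑ i ∈ Finset.range (m + 1), (c i - c m) * s i)
          + c m * ∑ i ∈ Finset.range (m + 1), s i := by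
      rw [Finset.mul_sum, ← Finset.sum_add_distrib]
      exact Finset.sum_congr rfl fun i _ => by ring
    rw [key]
    have h1 : 0 ≤ ∑ i ∈ Finset.range (m + 1), (c i - c m) * s i := by
      rw [Finset.sum_range_succ, sub_self, zero_mul, add_zero]
      refine ih (fun i => c i - c m) s ?_ ?_ ?_
      · intro i j hij hj
        exact sub_le_sub_right (hmono i j hij (Nat.lt_succ_of_lt hj)) (c m)
      · intro i hi
        exact sub_nonneg.2 (hmono i m (Nat.le_of_lt hi) (Nat.lt_succ_self m))
      · intro n hn
        exact hsum n (Nat.le_succ_of_le hn)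
    have h2 : 0 ≤ c m * ∑ i ∈ Finset.range (m + 1), s i :=
      mul_nonneg (hpos m (Nat.lt_succ_self m)) (hsum (m + 1) le_rfl)
    linarith

lemma sum_le_sum_of_weak_log_maj (d : ℕ) : ∀ (a b : ℕ → ℝ), (∀ i, i < d → 0 ≤ a i) →
    (∀ i, 0 ≤ b i) → (∀ i j, i ≤ j → j < d → a j ≤ a i) →
    (∀ n, n ≤ d → ∏ i ∈ Finset.range n, a i ≤ ∏ i ∈ Finset.range n, b i) →
    ∑ i ∈ Finset.range d, a i ≤ ∑ i ∈ Finset.range d, b i := by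
  induction d with
  | zero => intro a b _ _ _ _; simp
  | succ n ih =>
    intro a b ha0 hb0 hmono hprod
    by_cases hlast : a n = 0
    · have h1 : ∑ i ∈ Finset.range n, a i ≤ ∑ i ∈ Finset.range n, b i := by
        refine ih a b (fun i hi => ha0 i (Nat.lt_succ_of_lt hi)) hb0
          (fun i j hij hj => hmono i j hij (Nat.lt_succ_of_lt hj))
          (fun m hm => hprod m (Nat.le_succ_of_le hm))
      rw [Finset.sum_range_succ, Finset.sum_range_succ, hlast, add_zero]
      have := hb0 n
      linarith
    · have han : 0 < a n := lt_of_le_of_ne (ha0 n (Nat.lt_succ_self n)) (Ne.symm hlast)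
      have hapos : ∀ i, i < n + 1 → 0 < a i := by
        intro i hi
        exact lt_of_lt_of_le han (hmono i n (Nat.lt_succ_iff.1 hi) (Nat.lt_succ_self n))
      have hbpos : ∀ i, i < n + 1 → 0 < b i := by
        intro i hi
        by_contra hb
        have hbi : b i = 0 := le_antisymm (not_lt.1 hb) (hb0 i)
        have hprodz : ∏ j ∈ Finset.range (i + 1), b j = 0 :=
          Finset.prod_eq_zero (Finset.mem_range.2 (Nat.lt_succ_self i)) hbi
        have hprodpos : 0 < ∏ j ∈ Finset.range (i + 1), a j :=
          Finset.prod_pos fun j hj =>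
            hapos j (lt_of_lt_of_le (Finset.mem_range.1 hj) hi)
        have := hprod (i + 1) hi
        rw [hprodz] at this
        linarith
      have hperterm : ∀ i, i < n + 1 →
          a i * (Real.log (b i) - Real.log (a i)) ≤ b i - a i := by
        intro i hi
        have hai := hapos i hi
        have hbi := hbpos i hi
        have hlog : Real.log (b i / a i) ≤ b i / a i - 1 :=
          Real.log_le_sub_one_of_pos (div_pos hbi hai)
        rw [Real.log_div (ne_of_gt hbi) (ne_of_gt hai)] at hlog
        have := mul_le_mul_of_nonneg_left hlog (le_of_lt hai)
        calc a i * (Real.log (b i) - Real.log (a i))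
            ≤ a i * (b i / a i - 1) := this
          _ = b i - a i := by field_simp
      have habel : 0 ≤ ∑ i ∈ Finset.range (n + 1),
          a i * (Real.log (b i) - Real.log (a i)) := by
        refine abel_nonneg (n + 1) a (fun i => Real.log (b i) - Real.log (a i))
          (fun i j hij hj => hmono i j hij hj) (fun i hi => le_of_lt (hapos i hi)) ?_
        intro m hm
        rw [Finset.sum_sub_distrib]
        rw [← Real.log_prod (fun j hj => ne_of_gt (hbpos j (lt_of_lt_of_le (Finset.mem_range.1 hj) hm))),
          ← Real.log_prod (fun j hj => ne_of_gt (hapos j (lt_of_lt_of_le (Finset.mem_range.1 hj) hm)))]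
        have hpa : 0 < ∏ j ∈ Finset.range m, a j :=
          Finset.prod_pos fun j hj => hapos j (lt_of_lt_of_le (Finset.mem_range.1 hj) hm)
        have := Real.log_le_log hpa (hprod m hm)
        linarith
      have hsum : ∑ i ∈ Finset.range (n + 1), a i * (Real.log (b i) - Real.log (a i))
          ≤ ∑ i ∈ Finset.range (n + 1), (b i - a i) :=
        Finset.sum_le_sum fun i hi => hperterm i (Finset.mem_range.1 hi)
      rw [Finset.sum_sub_distrib] at hsum
      linarith

end WangXi

/-- Wang–Xi singular value inequality: for any `r > 0` and square real matrices
`A_1, …, A_t`, `∑_i σ_i(A_1⋯A_t)^r ≤ ∑_i σ_i(A_1)^r ⋯ σ_i(A_t)^r`. -/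
theorem stmt6 {d : ℕ} (r : ℝ) (hr : 0 < r) (t : ℕ)
    (A : Fin t → Matrix (Fin d) (Fin d) ℝ) :
    ∑ i, (singVal (List.ofFn A).prod i) ^ r ≤ ∑ i, ∏ j, (singVal (A j) i) ^ r := by
  classical
  set P := (List.ofFn A).prod with hP
  set a : ℕ → ℝ := fun n => if h : n < d then singVal P ⟨n, h⟩ ^ r else 0 with ha
  set b : ℕ → ℝ := fun n => if h : n < d then ∏ j, singVal (A j) ⟨n, h⟩ ^ r else 0 with hb
  have ha0 : ∀ i, i < d → 0 ≤ a i := by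
    intro i hi
    simp only [ha, dif_pos hi]
    exact Real.rpow_nonneg (WangXi.singVal_nonneg P _) r
  have hb0 : ∀ i, 0 ≤ b i := by
    intro i
    by_cases hi : i < d
    · simp only [hb, dif_pos hi]
      exact Finset.prod_nonneg fun j _ => Real.rpow_nonneg (WangXi.singVal_nonneg (A j) _) r
    · simp only [hb, dif_neg hi]; exact le_rfl
  have hmono : ∀ i j, i ≤ j → j < d → a j ≤ a i := by
    intro i j hij hj
    have hi : i < d := lt_of_le_of_lt hij hj
    simp only [ha, dif_pos hi, dif_pos hj]
    exact Real.rpow_le_rpow (WangXi.singVal_nonneg P _)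
      (WangXi.singVal_antitone P (show (⟨i, hi⟩ : Fin d) ≤ ⟨j, hj⟩ from hij)) (le_of_lt hr)
  have hprod : ∀ n, n ≤ d → ∏ i ∈ Finset.range n, a i ≤ ∏ i ∈ Finset.range n, b i := by
    intro n hn
    have hae : ∏ i ∈ Finset.range n, a i
        = (∏ i : Fin n, singVal P (Fin.castLE hn i)) ^ r := by
      rw [← Real.finset_prod_rpow _ _ (fun i _ => WangXi.singVal_nonneg P _) r]
      rw [← Fin.prod_univ_eq_prod_range]
      refine Finset.prod_congr rfl fun i _ => ?_
      have hi : (i : ℕ) < d := lt_of_lt_of_le i.2 hn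
      simp only [ha, dif_pos hi]
      rfl
    have hbe : ∏ i ∈ Finset.range n, b i
        = ∏ i : Fin n, ∏ j, singVal (A j) (Fin.castLE hn i) ^ r := by
      rw [← Fin.prod_univ_eq_prod_range]
      refine Finset.prod_congr rfl fun i _ => ?_
      have hi : (i : ℕ) < d := lt_of_lt_of_le i.2 hn
      simp only [hb, dif_pos hi]
      rfl
    rw [hae, hbe]
    have hlist := WangXi.horn_list hn (List.ofFn A)
    have hmap : ∀ i : Fin n, ((List.ofFn A).map (fun M => singVal M (Fin.castLE hn i))).prod
        = ∏ j, singVal (A j) (Fin.castLE hn i) := by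
      intro i
      rw [List.map_ofFn, List.prod_ofFn]
      rfl
    have step1 : (∏ i : Fin n, singVal P (Fin.castLE hn i)) ^ r
        ≤ (∏ i : Fin n, ∏ j, singVal (A j) (Fin.castLE hn i)) ^ r := by
      refine Real.rpow_le_rpow (WangXi.prod_singVal_nonneg hn P) ?_ (le_of_lt hr)
      calc ∏ i : Fin n, singVal P (Fin.castLE hn i)
          ≤ ∏ i : Fin n, ((List.ofFn A).map (fun M => singVal M (Fin.castLE hn i))).prod := hlist
        _ = ∏ i : Fin n, ∏ j, singVal (A j) (Fin.castLE hn i) :=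
            Finset.prod_congr rfl fun i _ => hmap i
    refine le_trans step1 (le_of_eq ?_)
    rw [← Real.finset_prod_rpow _ _ (fun i _ =>
      Finset.prod_nonneg fun j _ => WangXi.singVal_nonneg (A j) _) r]
    refine Finset.prod_congr rfl fun i _ => ?_
    rw [← Real.finset_prod_rpow _ _ (fun j _ => WangXi.singVal_nonneg (A j) _) r]
  have hmain := WangXi.sum_le_sum_of_weak_log_maj d a b ha0 hb0 hmono hprod
  have hL : ∑ i, (singVal P i) ^ r = ∑ i ∈ Finset.range d, a i := by
    rw [← Fin.sum_univ_eq_sum_range]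
    refine Finset.sum_congr rfl fun i _ => ?_
    simp only [ha, dif_pos i.2]
  have hR : ∑ i, ∏ j, (singVal (A j) i) ^ r = ∑ i ∈ Finset.range d, b i := by
    rw [← Fin.sum_univ_eq_sum_range]
    refine Finset.sum_congr rfl fun i _ => ?_
    simp only [hb, dif_pos i.2]
  rw [hL, hR]
  exact hmain
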